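/- arXiv:1911.03634 — 2 statements merged into one kernel-verified Lean document; each statement's English description precedes it below -/
import Mathlib

section
/- Suppose S ⊆ P({1,...,n}) \ {∅} and there exist constants c_1,...,c_n (rationals or integers) such that for every sequence A of finite sets, |F_S(A)| = Σ_{k=1}^n c_k · i_{n,k}(A). Then for each 1 ≤ k ≤ n, if S contains some set of cardinality k, it contains every subset of {1,...,n} of cardinality k. -/
open Finset

/-- `G_J(A)`: intersection of the `A j` for `j ∈ J` with the complements
(relative to the union of all the `A i`) of the `A j` for `j ∉ J`. -/
def gset {α : Type*} {n : ℕ} (A : Fin n → Set α) (J : Finset (Fin n)) : Set α :=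
  (⋂ j ∈ J, A j) ∩ ⋂ j ∈ Jᶜ, ((⋃ i, A i) \ A j)

/-- `F_S(A) = ⋃_{J ∈ S} G_J(A)`. -/
def fset {α : Type*} {n : ℕ} (A : Fin n → Set α) (S : Finset (Finset (Fin n))) : Set α :=
  ⋃ J ∈ S, gset A J

/-- `i_{n,k}(A)`: the sum over all `k`-element subsets `J` of the index set of
the cardinality of `⋂_{j ∈ J} A j`. -/
noncomputable def icard {α : Type*} {n : ℕ} (A : Fin n → Set α) (k : ℕ) : ℕ :=
  ∑ J ∈ Finset.powersetCard k (Finset.univ : Finset (Fin n)), (⋂ j ∈ J, A j).ncard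

/-- `σ_{n,j}(A)`: the sum over all `j`-element subsets `I` of the index set of
the cardinality of `G_I(A)`. -/
noncomputable def sigmacard {α : Type*} {n : ℕ} (A : Fin n → Set α) (j : ℕ) : ℕ :=
  ∑ I ∈ Finset.powersetCard j (Finset.univ : Finset (Fin n)), (gset A I).ncard

/-
Test the identity on the family that puts a single point `x` into exactly the sets `A i` with
`i ∈ T`. A point lies in `F_S(A)` iff its membership pattern `{j | y ∈ A j}` lies in `S` (points
with empty pattern are excluded because `∅ ∉ S`), so the left-hand side is `1` or `0` according
to whether `T ∈ S`, while `i_{n,k}(A) = C(|T|, k)` only depends on `|T|`. Hence two index sets of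
the same size are either both in `S` or both outside it.
-/

section VennRegions

variable {α : Type*} {n : ℕ}

lemma mem_gset_iff {A : Fin n → Set α} {J : Finset (Fin n)} (hJ : J.Nonempty) {y : α} :
    y ∈ gset A J ↔ ∀ j, y ∈ A j ↔ j ∈ J := by
  obtain ⟨j₀, hj₀⟩ := hJ
  simp only [gset, Set.mem_inter_iff, Set.mem_iInter, Set.mem_sdiff, Set.mem_iUnion,
    Finset.mem_compl]
  constructor
  · rintro ⟨hin, hout⟩ j
    exact ⟨fun hy => by_contra fun hj => (hout j hj).2 hy, hin j⟩
  · intro h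
    exact ⟨fun j hj => (h j).2 hj,
      fun j hj => ⟨⟨j₀, (h j₀).2 hj₀⟩, fun hy => hj ((h j).1 hy)⟩⟩

lemma mem_fset_iff {A : Fin n → Set α} {S : Finset (Finset (Fin n))} (hS : ∅ ∉ S) {y : α} :
    y ∈ fset A S ↔ ∃ J ∈ S, ∀ j, y ∈ A j ↔ j ∈ J := by
  simp only [fset, Set.mem_iUnion, exists_prop]
  refine exists_congr fun J => and_congr_right fun hJS => mem_gset_iff ?_
  exact nonempty_iff_ne_empty.2 fun h => hS (h ▸ hJS)

end VennRegions

section PointFamily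

variable {α : Type*} {n : ℕ}

def pointFamily (T : Finset (Fin n)) (x : α) : Fin n → Set α :=
  fun i => if i ∈ T then {x} else ∅

@[simp]
lemma mem_pointFamily {T : Finset (Fin n)} {x y : α} {i : Fin n} :
    y ∈ pointFamily T x i ↔ y = x ∧ i ∈ T := by
  unfold pointFamily
  split_ifs with h <;> simp [h]

lemma pointFamily_finite (T : Finset (Fin n)) (x : α) (i : Fin n) :
    (pointFamily T x i).Finite := by
  unfold pointFamily
  split_ifs <;> simp

lemma fset_pointFamily {S : Finset (Finset (Fin n))} (hS : ∅ ∉ S) (T : Finset (Fin n))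
    (x : α) :
    fset (pointFamily T x) S = if T ∈ S then {x} else ∅ := by
  ext y
  rw [mem_fset_iff hS]
  by_cases hy : y = x
  · subst hy
    have pattern : ∀ J, (∀ j, y ∈ pointFamily T y j ↔ j ∈ J) ↔ J = T := fun J => by
      simp only [mem_pointFamily, true_and]
      exact ⟨fun h => (ext h).symm, fun h j => h ▸ Iff.rfl⟩
    simp only [pattern, exists_eq_right]
    split_ifs <;> simp_all
  · have hempty : ∀ J ∈ S, ¬∀ j, y ∈ pointFamily T x j ↔ j ∈ J := fun J hJS hJ =>
      hS (eq_empty_of_forall_notMem (fun j hj => hy (mem_pointFamily.1 ((hJ j).2 hj)).1) ▸ hJS)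
    split_ifs <;> simpa [hy] using hempty

lemma ncard_iInter_pointFamily (T : Finset (Fin n)) {J : Finset (Fin n)} (hJ : J.Nonempty)
    (x : α) : (⋂ j ∈ J, pointFamily T x j).ncard = if J ⊆ T then 1 else 0 := by
  have : (⋂ j ∈ J, pointFamily T x j) = if J ⊆ T then {x} else ∅ := by
    obtain ⟨j₀, hj₀⟩ := hJ
    ext y
    simp only [Set.mem_iInter, mem_pointFamily]
    split_ifs with h
    · exact ⟨fun hy => (hy j₀ hj₀).1, fun hy j hj => ⟨hy, h hj⟩⟩
    · obtain ⟨j, hjJ, hjT⟩ := not_subset.1 h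
      exact ⟨fun hy => hjT (hy j hjJ).2, False.elim⟩
  rw [this]
  split_ifs <;> simp

lemma icard_pointFamily (T : Finset (Fin n)) (x : α) {k : ℕ} (hk : 1 ≤ k) :
    icard (pointFamily T x) k = T.card.choose k := by
  have hcard : ∀ J ∈ powersetCard k (univ : Finset (Fin n)),
      (⋂ j ∈ J, pointFamily T x j).ncard = if J ⊆ T then 1 else 0 := fun J hJ =>
    ncard_iInter_pointFamily T (card_pos.1 ((mem_powersetCard.1 hJ).2 ▸ hk)) x
  rw [icard, sum_congr rfl hcard, sum_boole, Nat.cast_id, ← card_powersetCard k T]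
  congr 1
  ext J
  simp only [mem_filter, mem_powersetCard, subset_univ, true_and]
  tauto

end PointFamily

theorem stmt_10 {n : ℕ} (S : Finset (Finset (Fin n))) (hS : ∅ ∉ S) (c : ℕ → ℚ)
    (hc : ∀ A : Fin n → Set ℕ, (∀ i, (A i).Finite) →
      ((fset A S).ncard : ℚ) = ∑ k ∈ Finset.Icc 1 n, c k * icard A k) :
    ∀ I ∈ S, ∀ J : Finset (Fin n), J.card = I.card → J ∈ S := by
  intro I hI J hJI
  have hsum : ∑ k ∈ Icc 1 n, c k * icard (pointFamily I 0) k
      = ∑ k ∈ Icc 1 n, c k * icard (pointFamily J 0) k :=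
    sum_congr rfl fun k hk => by
      rw [icard_pointFamily I 0 (mem_Icc.1 hk).1, icard_pointFamily J 0 (mem_Icc.1 hk).1, hJI]
  have hcI := hc _ (pointFamily_finite I 0)
  have hcJ := hc _ (pointFamily_finite J 0)
  rw [fset_pointFamily hS I, if_pos hI] at hcI
  rw [fset_pointFamily hS J, ← hsum, ← hcI] at hcJ
  by_contra hJS
  simp [hJS] at hcJ
end

section
/- For any finite sets A_1,...,A_n, the number of elements x with |{j : x ∈ A_j}| odd equals Σ_{k=1}^{n} (-1)^{k-1} 2^{k-1} i_{n,k}(A). -/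
open Finset

/-! An element lying in exactly `m` of the sets is counted `m.choose k` times in `icard A k`,
so the right-hand side counts it with weight
`∑ k ≥ 1, (-1)^(k-1) 2^(k-1) m.choose k = (1 - (1 - 2)^m) / 2`, which is `1` if `m` is odd
and `0` otherwise. -/

theorem sum_range_neg_two_pow_mul_choose {m n : ℕ} (hmn : m ≤ n) :
    ∑ k ∈ range (n + 1), (-2 : ℤ) ^ k * m.choose k = (-1) ^ m := by
  rw [← sum_subset (range_subset_range.2 (Nat.succ_le_succ hmn)) fun k _ hk => by
    simp [Nat.choose_eq_zero_of_lt (not_lt.1 (mt mem_range.2 hk))]]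
  simpa using (add_pow (-2 : ℤ) 1 m).symm

theorem sum_Icc_neg_one_pow_mul_two_pow_mul_choose {m n : ℕ} (hmn : m ≤ n) :
    ∑ k ∈ Icc 1 n, (-1 : ℤ) ^ (k - 1) * 2 ^ (k - 1) * m.choose k = if Odd m then 1 else 0 := by
  have hdouble :
      2 * ∑ k ∈ Icc 1 n, (-1 : ℤ) ^ (k - 1) * 2 ^ (k - 1) * m.choose k = 1 - (-1) ^ m := by
    rw [← sum_range_neg_two_pow_mul_choose hmn, sum_range_succ', ← Ico_add_one_right_eq_Icc,
      sum_Ico_eq_sum_range, mul_sum]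
    simp only [add_tsub_cancel_right, add_comm 1, pow_zero,
      Nat.choose_zero_right, Nat.cast_one, mul_one, sub_add_cancel_right, ← sum_neg_distrib]
    refine sum_congr rfl fun k _ => ?_
    rw [pow_succ, neg_pow (2 : ℤ)]
    ring
  rcases Nat.even_or_odd m with hm | hm
  · rw [hm.neg_one_pow, if_neg (Nat.not_odd_iff_even.2 hm)] at *; linarith
  · rw [hm.neg_one_pow, if_pos hm] at *; linarith

section Degree

variable {α ι : Type*} {A : ι → Set α} {U : Finset α}

theorem ncard_setOf_odd_ncard_eq_card_filter (hU : ∀ i, A i ⊆ U) :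
    {x | Odd {j | x ∈ A j}.ncard}.ncard = #{x ∈ U | Odd {j | x ∈ A j}.ncard} := by
  rw [← Set.ncard_coe_finset, coe_filter]
  congr 1
  ext x
  refine ⟨fun hx => ⟨?_, hx⟩, And.right⟩
  obtain ⟨j, hj⟩ := Set.nonempty_of_ncard_ne_zero hx.pos.ne'
  exact hU j hj

variable [Fintype ι]

theorem sum_powersetCard_ncard_biInter (hU : ∀ i, A i ⊆ U) {k : ℕ} (hk : k ≠ 0) :
    ∑ J ∈ powersetCard k univ, (⋂ j ∈ J, A j).ncard = ∑ x ∈ U, {j | x ∈ A j}.ncard.choose k := by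
  classical
  set r : Finset ι → α → Prop := fun J x => ∀ j ∈ J, x ∈ A j
  have hinter : ∀ J ∈ powersetCard k univ, (⋂ j ∈ J, A j).ncard = #(U.bipartiteAbove r J) := by
    intro J hJ
    obtain ⟨j₀, hj₀⟩ : J.Nonempty := card_pos.1 (by rw [(mem_powersetCard.1 hJ).2]; omega)
    rw [← Set.ncard_coe_finset, coe_bipartiteAbove]
    congr 1
    ext x
    simp only [Set.mem_iInter, Set.mem_ofPred_eq, r]
    exact ⟨fun hx => ⟨hU j₀ (hx j₀ hj₀), hx⟩, And.right⟩
  have hdeg : ∀ x ∈ U,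
      {j | x ∈ A j}.ncard.choose k = #((powersetCard k univ).bipartiteBelow r x) := by
    intro x _
    have : (powersetCard k univ).bipartiteBelow r x = powersetCard k {j | x ∈ A j} := by
      ext J
      simp [r, subset_iff, and_comm]
    rw [this, card_powersetCard, Set.ncard_eq_toFinset_card', Set.toFinset_ofPred]
  rw [sum_congr rfl hinter, sum_congr rfl hdeg, sum_card_bipartiteAbove_eq_sum_card_bipartiteBelow]

end Degree

theorem stmt_18 {α : Type*} {n : ℕ} (A : Fin n → Set α) (hA : ∀ i, (A i).Finite) :
    ({x : α | Odd {j : Fin n | x ∈ A j}.ncard}.ncard : ℤ)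
      = ∑ k ∈ Finset.Icc 1 n,
          (-1 : ℤ) ^ (k - 1) * 2 ^ (k - 1) * icard A k := by
  set U := (Set.finite_iUnion hA).toFinset
  have hU : ∀ i, A i ⊆ U := fun i => by simpa [U] using Set.subset_iUnion A i
  calc ({x : α | Odd {j : Fin n | x ∈ A j}.ncard}.ncard : ℤ)
      = ∑ x ∈ U, if Odd {j : Fin n | x ∈ A j}.ncard then (1 : ℤ) else 0 := by
        rw [ncard_setOf_odd_ncard_eq_card_filter hU, sum_boole]
    _ = ∑ x ∈ U, ∑ k ∈ Icc 1 n,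
          (-1 : ℤ) ^ (k - 1) * 2 ^ (k - 1) * {j : Fin n | x ∈ A j}.ncard.choose k :=
        sum_congr rfl fun x _ => (sum_Icc_neg_one_pow_mul_two_pow_mul_choose
          ((Set.ncard_le_card _).trans_eq (Nat.card_fin n))).symm
    _ = ∑ k ∈ Icc 1 n, (-1 : ℤ) ^ (k - 1) * 2 ^ (k - 1) * icard A k := by
        rw [sum_comm]
        refine sum_congr rfl fun k hk => ?_
        rw [icard, sum_powersetCard_ncard_biInter hU (Nat.one_le_iff_ne_zero.1 (mem_Icc.1 hk).1),
          Nat.cast_sum, mul_sum]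
end
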